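/- Let $G = (V, E)$ be a finite digraph and $f : V \to \mathbb{R}^\times$ non-vanishing. The chain isomorphism $\varphi(v_0 \cdots v_n) = \frac{1}{f(v_0) \cdots f(v_n)} v_0 \cdots v_n$ on regular paths maps the $\partial$-invariant complex $\Omega_n(G) = \mathcal{A}_n(G) \cap \partial_n^{-1}(\mathcal{A}_{n-1}(G))$ isomorphically onto the $f$-weighted $\partial$-invariant complex $\Omega_n^{f}(G) = \mathcal{A}_n(G) \cap (\partial_n^f)^{-1}(\mathcal{A}_{n-1}(G))$ for every $n \geq 0$. -/

import Mathlib

open LinearMap Submodule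

/-- The `f`-weighted boundary operator `∂ₙ₊₁^f` on `Λₙ₊₁(V)`. -/
noncomputable def pathBoundary (V : Type) (f : V → ℝ) (n : ℕ) :
    ((Fin (n + 2) → V) →₀ ℝ) →ₗ[ℝ] ((Fin (n + 1) → V) →₀ ℝ) :=
  Finsupp.lsum ℝ fun p => LinearMap.toSpanSingleton ℝ _
    (∑ i : Fin (n + 2), ((-1 : ℝ) ^ (i : ℕ) * f (p i)) •
      Finsupp.single (p ∘ i.succAbove) 1)

/-- The rescaling map `φ(v₀…vₙ) = (f(v₀)⋯f(vₙ))⁻¹ v₀…vₙ`. -/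
noncomputable def pathRescale (V : Type) (f : V → ℝ) (n : ℕ) :
    ((Fin (n + 1) → V) →₀ ℝ) →ₗ[ℝ] ((Fin (n + 1) → V) →₀ ℝ) :=
  Finsupp.lsum ℝ fun p => LinearMap.toSpanSingleton ℝ _
    ((∏ i, f (p i))⁻¹ • Finsupp.single p 1)

/-- The subspace `Iₙ(V)` of irregular paths. -/
noncomputable def Irr (V : Type) (n : ℕ) :
    Submodule ℝ ((Fin (n + 1) → V) →₀ ℝ) :=
  Submodule.span ℝ {x | ∃ p : Fin (n + 1) → V,
    (∃ i : Fin n, p i.castSucc = p i.succ) ∧ x = Finsupp.single p 1}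

/-- The subspace `𝓐ₙ(G) ⊆ 𝓡ₙ(V) = Λₙ(V)/Iₙ(V)` spanned by the (classes of)
allowed elementary paths of the digraph `G = (V, E)`. -/
noncomputable def Allowed (V : Type) (E : V → V → Prop) (n : ℕ) :
    Submodule ℝ (((Fin (n + 1) → V) →₀ ℝ) ⧸ Irr V n) :=
  Submodule.span ℝ {x | ∃ p : Fin (n + 1) → V,
    (∀ i : Fin n, E (p i.castSucc) (p i.succ)) ∧
    x = Submodule.mkQ (Irr V n) (Finsupp.single p 1)}

/-- The `f`-weighted `∂`-invariant complex
`Ωₙ^f(G) = 𝓐ₙ(G) ∩ (∂ₙ^f)⁻¹(𝓐ₙ₋₁(G))`, inside `𝓡ₙ(V)`. -/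
noncomputable def Omega (V : Type) (E : V → V → Prop) (f : V → ℝ)
    (hbdf : ∀ n, Irr V (n + 1) ≤ (Irr V n).comap (pathBoundary V f n)) :
    ∀ n, Submodule ℝ (((Fin (n + 1) → V) →₀ ℝ) ⧸ Irr V n)
  | 0 => Allowed V E 0
  | (n + 1) => Allowed V E (n + 1) ⊓
      Submodule.comap
        (Submodule.mapQ (Irr V (n + 1)) (Irr V n) (pathBoundary V f n) (hbdf n))
        (Allowed V E n)

/-!
The rescaling `φ_f` multiplies each elementary path by a nonzero scalar, so it preserves
the irregular paths `Iₙ(V)` and the allowed paths `𝓐ₙ(G)`, and it is invertible with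
inverse `φ_{1/f}`. Removing the vertex `vᵢ` from `v₀⋯vₙ₊₁` removes the factor `f(vᵢ)`
from the product `f(v₀)⋯f(vₙ₊₁)`, which is exactly the weight of that face in `∂^f`;
hence `∂^f ∘ φ_f = φ_f ∘ ∂`.
An isomorphism intertwining `∂` with `∂^f` and preserving `𝓐_*(G)` carries
`𝓐ₙ ∩ ∂⁻¹(𝓐ₙ₋₁)` onto `𝓐ₙ ∩ (∂^f)⁻¹(𝓐ₙ₋₁)`.
-/

namespace Submodule

variable {R M M' N N' : Type*} [Ring R] [AddCommGroup M] [Module R M] [AddCommGroup M']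
  [Module R M'] [AddCommGroup N] [Module R N] [AddCommGroup N'] [Module R N']

theorem map_span_eq_self_of_forall_smul {s : Set M} {φ : M →ₗ[R] M}
    (hφ : ∀ x ∈ s, ∃ c : Rˣ, φ x = c • x) : (span R s).map φ = span R s := by
  apply le_antisymm
  · rw [map_span, span_le]
    rintro _ ⟨x, hx, rfl⟩
    obtain ⟨c, hc⟩ := hφ x hx
    rw [hc]
    exact smul_mem _ _ (subset_span hx)
  · rw [span_le]
    intro x hx
    obtain ⟨c, hc⟩ := hφ x hx
    have hx' : x = (↑c⁻¹ : R) • φ x := by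
      rw [hc, Units.smul_def, smul_smul, Units.inv_mul, one_smul]
    rw [SetLike.mem_coe, hx']
    exact smul_mem _ _ (mem_map_of_mem (subset_span hx))

theorem map_comap_eq_of_comp_eq {φ : M →ₗ[R] M'} {ψ : N →ₗ[R] N'} {d : M →ₗ[R] N}
    {d' : M' →ₗ[R] N'} (hcomm : d'.comp φ = ψ.comp d) (hφ : Function.Surjective φ)
    (hψ : Function.Injective ψ) {A : Submodule R N} {A' : Submodule R N'} (hA : A.map ψ = A') :
    (A.comap d).map φ = A'.comap d' := by
  rw [← comap_map_eq_of_injective hψ A, hA, ← comap_comp, ← hcomm, comap_comp,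
    map_comap_eq_of_surjective hφ]

end Submodule

section Rescale

variable (V : Type) (n : ℕ)

@[simp]
theorem pathRescale_single (f : V → ℝ) (p : Fin (n + 1) → V) :
    pathRescale V f n (Finsupp.single p 1) = (∏ i, f (p i))⁻¹ • Finsupp.single p 1 := by
  simp [pathRescale]

@[simp]
theorem pathBoundary_single (f : V → ℝ) (p : Fin (n + 2) → V) :
    pathBoundary V f n (Finsupp.single p 1) =
      ∑ i : Fin (n + 2),
        ((-1 : ℝ) ^ (i : ℕ) * f (p i)) • Finsupp.single (p ∘ i.succAbove) 1 := by
  simp [pathBoundary]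

theorem pathRescale_comp (f g : V → ℝ) :
    (pathRescale V f n).comp (pathRescale V g n) = pathRescale V (f * g) n := by
  refine Finsupp.lhom_ext' fun p => LinearMap.ext_ring ?_
  simp only [LinearMap.comp_apply, Finsupp.lsingle_apply, pathRescale_single, map_smul,
    smul_smul]
  rw [Pi.mul_def, Finset.prod_mul_distrib, mul_inv, mul_comm]

theorem pathRescale_one : pathRescale V 1 n = LinearMap.id := by
  refine Finsupp.lhom_ext' fun p => LinearMap.ext_ring ?_
  simp

theorem irr_le_comap_pathRescale (f : V → ℝ) :
    Irr V n ≤ (Irr V n).comap (pathRescale V f n) := by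
  rw [Irr, span_le]
  rintro _ ⟨p, hp, rfl⟩
  rw [SetLike.mem_coe, mem_comap, pathRescale_single]
  exact smul_mem _ _ (subset_span ⟨p, hp, rfl⟩)

variable {V} {f : V → ℝ}

theorem mapQ_pathRescale_bijective (hf : ∀ v, f v ≠ 0)
    (h : Irr V n ≤ (Irr V n).comap (pathRescale V f n)) :
    Function.Bijective (mapQ (Irr V n) (Irr V n) (pathRescale V f n) h) := by
  have hinv : f⁻¹ * f = 1 := funext fun v => inv_mul_cancel₀ (hf v)
  have hinv' : f * f⁻¹ = 1 := funext fun v => mul_inv_cancel₀ (hf v)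
  let ψ := mapQ (Irr V n) (Irr V n) (pathRescale V f⁻¹ n) (irr_le_comap_pathRescale V n _)
  have hleft : ψ.comp (mapQ _ _ _ h) = LinearMap.id := by
    rw [← mapQ_comp]
    convert mapQ_id (Irr V n) using 2
    rw [pathRescale_comp, hinv, pathRescale_one]
  have hright : (mapQ _ _ _ h).comp ψ = LinearMap.id := by
    rw [← mapQ_comp]
    convert mapQ_id (Irr V n) using 2
    rw [pathRescale_comp, hinv', pathRescale_one]
  exact Function.bijective_iff_has_inverse.2
    ⟨ψ, LinearMap.congr_fun hleft, LinearMap.congr_fun hright⟩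

theorem map_mapQ_pathRescale_allowed (hf : ∀ v, f v ≠ 0) (E : V → V → Prop)
    (h : Irr V n ≤ (Irr V n).comap (pathRescale V f n)) :
    (Allowed V E n).map (mapQ (Irr V n) (Irr V n) (pathRescale V f n) h) = Allowed V E n := by
  refine map_span_eq_self_of_forall_smul ?_
  rintro _ ⟨p, -, rfl⟩
  refine ⟨Units.mk0 (∏ i, f (p i))⁻¹
    (inv_ne_zero (Finset.prod_ne_zero_iff.2 fun i _ => hf (p i))), ?_⟩
  rw [mkQ_apply, mapQ_apply, pathRescale_single, Units.smul_mk0, Quotient.mk_smul]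

theorem pathBoundary_comp_pathRescale (hf : ∀ v, f v ≠ 0) :
    (pathBoundary V f n).comp (pathRescale V f (n + 1)) =
      (pathRescale V f n).comp (pathBoundary V (fun _ => 1) n) := by
  refine Finsupp.lhom_ext' fun p => LinearMap.ext_ring ?_
  simp only [LinearMap.comp_apply, Finsupp.lsingle_apply, pathRescale_single, map_smul,
    pathBoundary_single, mul_one, map_sum, Finset.smul_sum, smul_smul]
  refine Finset.sum_congr rfl fun i _ => ?_
  have hprod := Fin.prod_univ_succAbove (fun j => f (p j)) i
  have hface : ∏ j, f (p (i.succAbove j)) ≠ 0 := Finset.prod_ne_zero_iff.2 fun j _ => hf _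
  simp only [Function.comp_apply] at hprod ⊢
  rw [hprod]
  field_simp [hf (p i)]

end Rescale

theorem stmt11_general (V : Type) (E : V → V → Prop)
    (f : V → ℝ) (hf : ∀ v, f v ≠ 0)
    (hbd : ∀ n, Irr V (n + 1) ≤ (Irr V n).comap (pathBoundary V (fun _ => 1) n))
    (hbdf : ∀ n, Irr V (n + 1) ≤ (Irr V n).comap (pathBoundary V f n))
    (hres : ∀ n, Irr V n ≤ (Irr V n).comap (pathRescale V f n)) :
    ∀ n, Function.Bijective
        (Submodule.mapQ (Irr V n) (Irr V n) (pathRescale V f n) (hres n)) ∧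
      Submodule.map
          (Submodule.mapQ (Irr V n) (Irr V n) (pathRescale V f n) (hres n))
          (Omega V E (fun _ => 1) hbd n)
        = Omega V E f hbdf n := by
  have hbij n := mapQ_pathRescale_bijective n hf (hres n)
  have hallowed n := map_mapQ_pathRescale_allowed n hf E (hres n)
  rintro (_ | n)
  · exact ⟨hbij 0, hallowed 0⟩
  · refine ⟨hbij (n + 1), ?_⟩
    have hcomm : (mapQ _ _ (pathBoundary V f n) (hbdf n)).comp (mapQ _ _ _ (hres (n + 1))) =
        (mapQ _ _ _ (hres n)).comp (mapQ _ _ (pathBoundary V (fun _ => 1) n) (hbd n)) := by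
      rw [← mapQ_comp, ← mapQ_comp]
      congr 1
      exact pathBoundary_comp_pathRescale n hf
    rw [Omega, Omega, map_inf _ (hbij (n + 1)).injective, hallowed,
      map_comap_eq_of_comp_eq hcomm (hbij (n + 1)).surjective (hbij n).injective (hallowed n)]

/-- the rescaling chain isomorphism of `𝓡_*(V)` maps `Ωₙ(G)`
isomorphically onto `Ωₙ^f(G)` for every `n ≥ 0`. -/
theorem stmt11 (V : Type) [Fintype V] (E : V → V → Prop)
    (hE : ∀ u v, E u v → u ≠ v) (f : V → ℝ) (hf : ∀ v, f v ≠ 0)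
    (hbd : ∀ n, Irr V (n + 1) ≤ (Irr V n).comap (pathBoundary V (fun _ => 1) n))
    (hbdf : ∀ n, Irr V (n + 1) ≤ (Irr V n).comap (pathBoundary V f n))
    (hres : ∀ n, Irr V n ≤ (Irr V n).comap (pathRescale V f n)) :
    ∀ n, Function.Bijective
        (Submodule.mapQ (Irr V n) (Irr V n) (pathRescale V f n) (hres n)) ∧
      Submodule.map
          (Submodule.mapQ (Irr V n) (Irr V n) (pathRescale V f n) (hres n))
          (Omega V E (fun _ => 1) hbd n)
        = Omega V E f hbdf n :=
  stmt11_general V E f hf hbd hbdf hres
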